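/- Logarithmic transform of supersolutions: assume (H1) and (H2), with C > 0 the constant in the quadratic growth bound for F. Define the exponentially transformed generator f by f(t,x,y,z,α,β) := 2Cy·[F(t, x, (ln y)/(2C), z/(2Cy), α, β) − |z|²/(4Cy²)] for y > 0 and f(t,x,y,z,α,β) := 0 for y ≤ 0 (f is continuous on the region y > 0). Let w : [0,T]×ℝⁿ → ℝ be a viscosity supersolution of the obstacle Isaacs equation E(f, e^{2Ch}, e^{2Ch'}, e^{2Cg}), and suppose e^{2Ch(t,x)} ≤ w(t,x) ≤ e^{2Ch'(t,x)} for all (t,x). Then u := (ln w)/(2C) is a viscosity supersolution of the equation (I⁻). -/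

import Mathlib

open Set Filter Topology

noncomputable section

/-- Euclidean space `ℝⁿ`. -/
abbrev En (n : ℕ) : Type := EuclideanSpace ℝ (Fin n)

/-- Frobenius norm of a matrix. -/
noncomputable def frobNorm {n d : ℕ} (M : Matrix (Fin n) (Fin d) ℝ) : ℝ :=
  Real.sqrt (∑ i, ∑ j, (M i j) ^ 2)

/-- Row vector `q` multiplied by the matrix `M`. -/
def rowMul {n d : ℕ} (q : En n) (M : Matrix (Fin n) (Fin d) ℝ) : En d :=
  WithLp.toLp 2 (fun j => ∑ i, q i * M i j)

/-- The lower Hamiltonian `H⁻ = sup_α inf_β [½Tr(σσᵀX) + ⟨b,q⟩ + f(t,x,r,qσ,α,β)]`,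
for a generic generator `f`. -/
noncomputable def Hinf {n d : ℕ} (A B : Type)
    (b : ℝ → En n → A → B → En n)
    (σm : ℝ → En n → A → B → Matrix (Fin n) (Fin d) ℝ)
    (f : ℝ → En n → ℝ → En d → A → B → ℝ)
    (t : ℝ) (x : En n) (r : ℝ) (q : En n) (X : Matrix (Fin n) (Fin n) ℝ) : ℝ :=
  ⨆ α : A, ⨅ β : B,
    (1 / 2) * Matrix.trace (σm t x α β * (σm t x α β).transpose * X)
      + (inner ℝ (b t x α β) q : ℝ)
      + f t x r (rowMul q (σm t x α β)) α β

/-- The upper Hamiltonian `H⁺ = inf_β sup_α [...]`. -/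
noncomputable def Hsup {n d : ℕ} (A B : Type)
    (b : ℝ → En n → A → B → En n)
    (σm : ℝ → En n → A → B → Matrix (Fin n) (Fin d) ℝ)
    (f : ℝ → En n → ℝ → En d → A → B → ℝ)
    (t : ℝ) (x : En n) (r : ℝ) (q : En n) (X : Matrix (Fin n) (Fin n) ℝ) : ℝ :=
  ⨅ β : B, ⨆ α : A,
    (1 / 2) * Matrix.trace (σm t x α β * (σm t x α β).transpose * X)
      + (inner ℝ (b t x α β) q : ℝ)
      + f t x r (rowMul q (σm t x α β)) α β

/-- `φ` is of class `C^{1,2}` on `[0,T)×ℝⁿ`, with time derivative `φt`,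
spatial gradient `Dφ` and spatial Hessian `D2φ`, all continuous on `[0,T)×ℝⁿ`. -/
structure IsC12 (T : ℝ) {n : ℕ} (φ φt : ℝ → En n → ℝ) (Dφ : ℝ → En n → En n)
    (D2φ : ℝ → En n → Matrix (Fin n) (Fin n) ℝ) : Prop where
  cont : ContinuousOn (fun p : ℝ × En n => φ p.1 p.2) (Ico 0 T ×ˢ univ)
  cont_t : ContinuousOn (fun p : ℝ × En n => φt p.1 p.2) (Ico 0 T ×ˢ univ)
  cont_D : ContinuousOn (fun p : ℝ × En n => Dφ p.1 p.2) (Ico 0 T ×ˢ univ)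
  cont_D2 : ContinuousOn (fun p : ℝ × En n => D2φ p.1 p.2) (Ico 0 T ×ˢ univ)
  deriv_t : ∀ t ∈ Ico (0 : ℝ) T, ∀ x : En n,
    HasDerivWithinAt (fun s => φ s x) (φt t x) (Ico 0 T) t
  grad_x : ∀ t ∈ Ico (0 : ℝ) T, ∀ x : En n, HasGradientAt (fun y => φ t y) (Dφ t x) x
  hess_x : ∀ t ∈ Ico (0 : ℝ) T, ∀ x : En n,
    HasFDerivAt (fun y => Dφ t y)
      (LinearMap.toContinuousLinearMap (Matrix.toEuclideanLin (D2φ t x))) x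

/-- `u` is a viscosity subsolution of the obstacle equation
`min{u-ℓ, max{-∂u/∂t - H(t,x,u,Du,D²u), u-ℓ'}} = 0` on `[0,T)×ℝⁿ`, `u(T,·) = G`. -/
def IsSubsolution (T : ℝ) {n : ℕ}
    (H : ℝ → En n → ℝ → En n → Matrix (Fin n) (Fin n) ℝ → ℝ)
    (ℓ ℓ' : ℝ → En n → ℝ) (G : En n → ℝ) (u : ℝ → En n → ℝ) : Prop :=
  UpperSemicontinuousOn (fun p : ℝ × En n => u p.1 p.2) (Icc 0 T ×ˢ univ)
  ∧ (∀ x : En n, u T x ≤ G x)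
  ∧ ∀ (φ φt : ℝ → En n → ℝ) (Dφ : ℝ → En n → En n)
      (D2φ : ℝ → En n → Matrix (Fin n) (Fin n) ℝ),
      IsC12 T φ φt Dφ D2φ →
      ∀ t ∈ Ico (0 : ℝ) T, ∀ x : En n,
        (∀ s ∈ Ico (0 : ℝ) T, ∀ y : En n, u s y - φ s y ≤ u t x - φ t x) →
        min (u t x - ℓ t x)
          (max (-(φt t x) - H t x (u t x) (Dφ t x) (D2φ t x)) (u t x - ℓ' t x)) ≤ 0

/-- `u` is a viscosity supersolution of the obstacle equation. -/
def IsSupersolution (T : ℝ) {n : ℕ}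
    (H : ℝ → En n → ℝ → En n → Matrix (Fin n) (Fin n) ℝ → ℝ)
    (ℓ ℓ' : ℝ → En n → ℝ) (G : En n → ℝ) (u : ℝ → En n → ℝ) : Prop :=
  LowerSemicontinuousOn (fun p : ℝ × En n => u p.1 p.2) (Icc 0 T ×ˢ univ)
  ∧ (∀ x : En n, G x ≤ u T x)
  ∧ ∀ (φ φt : ℝ → En n → ℝ) (Dφ : ℝ → En n → En n)
      (D2φ : ℝ → En n → Matrix (Fin n) (Fin n) ℝ),
      IsC12 T φ φt Dφ D2φ →
      ∀ t ∈ Ico (0 : ℝ) T, ∀ x : En n,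
        (∀ s ∈ Ico (0 : ℝ) T, ∀ y : En n, u t x - φ t x ≤ u s y - φ s y) →
        0 ≤ min (u t x - ℓ t x)
          (max (-(φt t x) - H t x (u t x) (Dφ t x) (D2φ t x)) (u t x - ℓ' t x))

/-- Hypothesis (H1): continuity of `b`, `σ` on `[0,T]×ℝⁿ×A×B` and uniform
Lipschitz continuity in `x`. -/
def HypH1 {n d : ℕ} (T : ℝ) (A B : Type) [TopologicalSpace A] [TopologicalSpace B]
    (b : ℝ → En n → A → B → En n)
    (σm : ℝ → En n → A → B → Matrix (Fin n) (Fin d) ℝ) : Prop :=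
  ContinuousOn (fun p : ℝ × En n × A × B => b p.1 p.2.1 p.2.2.1 p.2.2.2)
      (Icc 0 T ×ˢ (univ : Set (En n × A × B)))
  ∧ ContinuousOn (fun p : ℝ × En n × A × B => σm p.1 p.2.1 p.2.2.1 p.2.2.2)
      (Icc 0 T ×ˢ (univ : Set (En n × A × B)))
  ∧ ∃ CL > (0 : ℝ), ∀ t ∈ Icc (0 : ℝ) T, ∀ (x x' : En n) (α : A) (β : B),
      ‖b t x α β - b t x' α β‖ + frobNorm (σm t x α β - σm t x' α β) ≤ CL * ‖x - x'‖

/-- Hypothesis (H2): `g`, `h`, `h'` continuous and bounded, `h < h'`,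
`h(T,·) ≤ g ≤ h'(T,·)`; `F` continuous with quadratic growth in `z`
with constant `C`. -/
def HypH2 {n d : ℕ} (T C : ℝ) (A B : Type) [TopologicalSpace A] [TopologicalSpace B]
    (g : En n → ℝ) (h h' : ℝ → En n → ℝ)
    (F : ℝ → En n → ℝ → En d → A → B → ℝ) : Prop :=
  Continuous g ∧ (∃ M, ∀ x : En n, |g x| ≤ M)
  ∧ ContinuousOn (fun p : ℝ × En n => h p.1 p.2) (Icc 0 T ×ˢ univ)
  ∧ ContinuousOn (fun p : ℝ × En n => h' p.1 p.2) (Icc 0 T ×ˢ univ)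
  ∧ (∃ M, ∀ t ∈ Icc (0 : ℝ) T, ∀ x : En n, |h t x| ≤ M ∧ |h' t x| ≤ M)
  ∧ (∀ t ∈ Icc (0 : ℝ) T, ∀ x : En n, h t x < h' t x)
  ∧ (∀ x : En n, h T x ≤ g x ∧ g x ≤ h' T x)
  ∧ ContinuousOn
      (fun p : ℝ × En n × ℝ × En d × A × B =>
        F p.1 p.2.1 p.2.2.1 p.2.2.2.1 p.2.2.2.2.1 p.2.2.2.2.2)
      (Icc 0 T ×ˢ (univ : Set (En n × ℝ × En d × A × B)))
  ∧ 0 < C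
  ∧ ∀ t ∈ Icc (0 : ℝ) T, ∀ (x : En n) (y : ℝ) (z : En d) (α : A) (β : B),
      |F t x y z α β| ≤ C * (1 + ‖z‖ ^ 2)

/-- Hypothesis (H3): `F` is differentiable in `(x,y,z)`, with
`|∂F/∂x|, |∂F/∂z| ≤ C(1+|z|²)` and `∂F/∂y ≤ C_ε + ε|z|²` for every `ε > 0`. -/
def HypH3 {n d : ℕ} (T C : ℝ) (A B : Type)
    (F : ℝ → En n → ℝ → En d → A → B → ℝ) : Prop :=
  ∃ (Fx : ℝ → En n → ℝ → En d → A → B → En n)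
    (Fy : ℝ → En n → ℝ → En d → A → B → ℝ)
    (Fz : ℝ → En n → ℝ → En d → A → B → En d),
    (∀ t ∈ Icc (0 : ℝ) T, ∀ (x : En n) (y : ℝ) (z : En d) (α : A) (β : B),
      HasGradientAt (fun x' => F t x' y z α β) (Fx t x y z α β) x
      ∧ HasDerivAt (fun y' => F t x y' z α β) (Fy t x y z α β) y
      ∧ HasGradientAt (fun z' => F t x y z' α β) (Fz t x y z α β) z
      ∧ ‖Fx t x y z α β‖ ≤ C * (1 + ‖z‖ ^ 2)
      ∧ ‖Fz t x y z α β‖ ≤ C * (1 + ‖z‖ ^ 2))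
    ∧ ∀ ε > (0 : ℝ), ∃ Cε > (0 : ℝ), ∀ t ∈ Icc (0 : ℝ) T,
        ∀ (x : En n) (y : ℝ) (z : En d) (α : A) (β : B),
          Fy t x y z α β ≤ Cε + ε * ‖z‖ ^ 2

/-- The function `ρ(x) = (1/λ) ln((e^{λγx}+1)/γ)`. -/
noncomputable def rho (γ lam : ℝ) (x : ℝ) : ℝ :=
  (1 / lam) * Real.log ((Real.exp (lam * γ * x) + 1) / γ)

/-- `ρ'`. -/
noncomputable def rho' (γ lam : ℝ) : ℝ → ℝ := deriv (rho γ lam)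

/-- `ρ''`. -/
noncomputable def rho'' (γ lam : ℝ) : ℝ → ℝ := deriv (rho' γ lam)

/-- The transformed generator
`F̄(t,x,ū,z̄) = (ρ''(ū)/ρ'(ū))|z̄|² − Kρ(ū)/ρ'(ū) + (e^{Kt}/ρ'(ū)) F(t,x,e^{−Kt}ρ(ū)+C̃,e^{−Kt}ρ'(ū)z̄)`. -/
noncomputable def Fbar {n d : ℕ} {A B : Type} (γ lam K Ct : ℝ)
    (F : ℝ → En n → ℝ → En d → A → B → ℝ)
    (t : ℝ) (x : En n) (ub : ℝ) (zb : En d) (α : A) (β : B) : ℝ :=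
  (rho'' γ lam ub / rho' γ lam ub) * ‖zb‖ ^ 2
    - K * rho γ lam ub / rho' γ lam ub
    + (Real.exp (K * t) / rho' γ lam ub)
      * F t x (Real.exp (-(K * t)) * rho γ lam ub + Ct)
          ((Real.exp (-(K * t)) * rho' γ lam ub) • zb) α β

/-- The change of variable `ū(t,x) = ρ⁻¹(e^{Kt}(u(t,x) − C̃))`. -/
noncomputable def transf {n : ℕ} (γ lam K Ct : ℝ) (u : ℝ → En n → ℝ) : ℝ → En n → ℝ :=
  fun t x => Function.invFun (rho γ lam) (Real.exp (K * t) * (u t x - Ct))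

/-- `(p,q,X)` belongs to the second-order parabolic superjet `𝒫^{2,+}u(t₀,x₀)`. -/
def ParabSuperjet (T : ℝ) {n : ℕ} (u : ℝ → En n → ℝ) (t0 : ℝ) (x0 : En n)
    (p : ℝ) (q : En n) (X : Matrix (Fin n) (Fin n) ℝ) : Prop :=
  X.IsSymm ∧
  ∀ ε > (0 : ℝ), ∃ δ > (0 : ℝ), ∀ t ∈ Ico (0 : ℝ) T, ∀ x : En n,
    |t - t0| < δ → ‖x - x0‖ < δ →
    u t x ≤ u t0 x0 + p * (t - t0) + (inner ℝ q (x - x0) : ℝ)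
      + (1 / 2) * (inner ℝ (Matrix.toEuclideanLin X (x - x0)) (x - x0) : ℝ)
      + ε * (|t - t0| + ‖x - x0‖ ^ 2)

/-- The parabolic subjet `𝒫^{2,−}u = −𝒫^{2,+}(−u)`. -/
def ParabSubjet (T : ℝ) {n : ℕ} (u : ℝ → En n → ℝ) (t0 : ℝ) (x0 : En n)
    (p : ℝ) (q : En n) (X : Matrix (Fin n) (Fin n) ℝ) : Prop :=
  ParabSuperjet T (fun t x => -(u t x)) t0 x0 (-p) (-q) (-X)

/-- The closure `𝒫̄^{2,+}u(t₀,x₀)` of the parabolic superjet. -/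
def ClosedParabSuperjet (T : ℝ) {n : ℕ} (u : ℝ → En n → ℝ) (t0 : ℝ) (x0 : En n)
    (p : ℝ) (q : En n) (X : Matrix (Fin n) (Fin n) ℝ) : Prop :=
  ∃ (tk : ℕ → ℝ) (xk : ℕ → En n) (pk : ℕ → ℝ) (qk : ℕ → En n)
    (Xk : ℕ → Matrix (Fin n) (Fin n) ℝ),
    (∀ k, tk k ∈ Ico (0 : ℝ) T ∧ ParabSuperjet T u (tk k) (xk k) (pk k) (qk k) (Xk k))
    ∧ Tendsto tk atTop (nhds t0) ∧ Tendsto xk atTop (nhds x0)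
    ∧ Tendsto (fun k => u (tk k) (xk k)) atTop (nhds (u t0 x0))
    ∧ Tendsto pk atTop (nhds p) ∧ Tendsto qk atTop (nhds q)
    ∧ Tendsto Xk atTop (nhds X)

/-- The doubled and penalized function
`Ψ_{ε,η}(t,x,y) = ū(t,x) − v̄(t,y) − |x−y|²/ε² − η(|x|²+|y|²)`. -/
noncomputable def Psi {n : ℕ} (ub vb : ℝ → En n → ℝ) (ε η : ℝ)
    (t : ℝ) (x y : En n) : ℝ :=
  ub t x - vb t y - ‖x - y‖ ^ 2 / ε ^ 2 - η * (‖x‖ ^ 2 + ‖y‖ ^ 2)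

/-- The exponentially transformed generator
`f(t,x,y,z) = 2Cy[F(t,x,(ln y)/(2C), z/(2Cy)) − |z|²/(4Cy²)]` for `y > 0`, `0` otherwise. -/
noncomputable def expGen {n d : ℕ} {A B : Type} (C : ℝ)
    (F : ℝ → En n → ℝ → En d → A → B → ℝ)
    (t : ℝ) (x : En n) (y : ℝ) (z : En d) (α : A) (β : B) : ℝ :=
  if 0 < y then
    2 * C * y * (F t x (Real.log y / (2 * C)) ((1 / (2 * C * y)) • z) α β
      - ‖z‖ ^ 2 / (4 * C * y ^ 2))
  else 0


/-! Since `exp` is increasing, a test function `φ` touching `u = (ln w)/(2C)` from below at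
`(t, x)` gives the test function `ψ = w(t,x) e^{2C(φ - φ(t,x))}` touching `w` from below there.
By the chain rule `ψ_t = 2Cw φ_t`, `Dψ = 2Cw Dφ` and `D²ψ = 2Cw (D²φ + 2C Dφ ⊗ Dφ)`; the term
`-|z|²/(4Cy²)` in `f` exactly cancels the contribution `2C²w |Dφ σ|²` of `Dφ ⊗ Dφ` to the trace,
so the `f`-Hamiltonian at `ψ` is `2Cw` times `H⁻` at `φ`. Multiplying by `2Cw > 0` and taking
`ln` preserve the signs in the obstacle inequalities. -/

open Matrix

theorem rowMul_eq_vecMul {n d : ℕ} (q : En n) (M : Matrix (Fin n) (Fin d) ℝ) :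
    rowMul q M = WithLp.toLp 2 (WithLp.ofLp q ᵥ* M) := rfl

theorem rowMul_smul {n d : ℕ} (a : ℝ) (q : En n) (M : Matrix (Fin n) (Fin d) ℝ) :
    rowMul (a • q) M = a • rowMul q M := by
  simp [rowMul_eq_vecMul, Matrix.smul_vecMul]

theorem trace_mul_transpose_mul_vecMulVec {n d : ℕ} (σ : Matrix (Fin n) (Fin d) ℝ) (q : En n) :
    trace (σ * σᵀ * vecMulVec (WithLp.ofLp q) (WithLp.ofLp q)) = ‖rowMul q σ‖ ^ 2 := by
  rw [mul_vecMulVec, trace_vecMulVec, ← mulVec_mulVec, ← vecMul_transpose σ,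
    ← dotProduct_mulVec, ← vecMul_transpose, ← real_inner_self_eq_norm_sq, rowMul_eq_vecMul,
    EuclideanSpace.inner_eq_star_dotProduct]
  simp

theorem toEuclideanLin_vecMulVec_apply {n : ℕ} (u v : En n) (k : En n) :
    toEuclideanLin (vecMulVec (WithLp.ofLp u) (WithLp.ofLp v)) k = inner ℝ v k • u := by
  ext i
  simp [vecMulVec_mulVec, EuclideanSpace.inner_eq_star_dotProduct, dotProduct_comm, mul_comm]

theorem IsC12.comp {T : ℝ} {n : ℕ} {φ φt : ℝ → En n → ℝ} {Dφ : ℝ → En n → En n}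
    {D2φ : ℝ → En n → Matrix (Fin n) (Fin n) ℝ} (hφ : IsC12 T φ φt Dφ D2φ)
    {G G' G'' : ℝ → ℝ} (hG : ∀ r, HasDerivAt G (G' r) r) (hG' : ∀ r, HasDerivAt G' (G'' r) r)
    (hG'' : Continuous G'') :
    IsC12 T (fun s y => G (φ s y)) (fun s y => G' (φ s y) * φt s y)
      (fun s y => G' (φ s y) • Dφ s y)
      (fun s y => G' (φ s y) • D2φ s y
        + G'' (φ s y) • vecMulVec (WithLp.ofLp (Dφ s y)) (WithLp.ofLp (Dφ s y))) := by
  have cG : Continuous G := continuous_iff_continuousAt.2 fun r => (hG r).continuousAt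
  have cG' : Continuous G' := continuous_iff_continuousAt.2 fun r => (hG' r).continuousAt
  have cD : ContinuousOn (fun p : ℝ × En n => WithLp.ofLp (Dφ p.1 p.2)) (Ico 0 T ×ˢ univ) :=
    (PiLp.continuous_ofLp 2 _).comp_continuousOn hφ.cont_D
  refine ⟨cG.comp_continuousOn hφ.cont, (cG'.comp_continuousOn hφ.cont).mul hφ.cont_t,
    (cG'.comp_continuousOn hφ.cont).smul hφ.cont_D,
    ((cG'.comp_continuousOn hφ.cont).smul hφ.cont_D2).add
      ((hG''.comp_continuousOn hφ.cont).smul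
        ((continuous_fst.matrix_vecMulVec continuous_snd).comp_continuousOn (cD.prodMk cD))),
    fun s hs y => ?_, fun s hs y => ?_, fun s hs y => ?_⟩
  · exact (hG (φ s y)).comp_hasDerivWithinAt s (hφ.deriv_t s hs y)
  · rw [hasGradientAt_iff_hasFDerivAt, map_smul]
    exact (hG (φ s y)).comp_hasFDerivAt y (hφ.grad_x s hs y).hasFDerivAt
  · have hG'φ := (hG' (φ s y)).comp_hasFDerivAt y (hφ.grad_x s hs y).hasFDerivAt
    refine (hG'φ.smul (hφ.hess_x s hs y)).congr_fderiv (ContinuousLinearMap.ext fun k => ?_)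
    simp [toEuclideanLin_vecMulVec_apply, mul_smul]

theorem hasDerivAt_const_mul_exp_mul_sub (a k r₀ r : ℝ) :
    HasDerivAt (fun r => a * Real.exp (k * (r - r₀))) (a * k * Real.exp (k * (r - r₀))) r := by
  have := (((hasDerivAt_id r).sub_const r₀).const_mul k).exp.const_mul a
  simpa [mul_assoc, mul_comm (Real.exp _)] using this

theorem mul_exp_le_of_log_div_sub_le {k a b p q : ℝ} (hk : 0 < k) (ha : 0 < a) (hb : 0 < b)
    (h : Real.log a / k - p ≤ Real.log b / k - q) : a * Real.exp (k * (q - p)) ≤ b := by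
  rw [← Real.exp_log ha, ← Real.exp_add, ← Real.le_log_iff_exp_le hb]
  have := mul_le_mul_of_nonneg_left h hk.le
  rw [mul_sub, mul_sub, mul_div_cancel₀ _ hk.ne', mul_div_cancel₀ _ hk.ne'] at this
  linarith

theorem le_log_div_iff_exp_mul_le {k a y : ℝ} (hk : 0 < k) (hy : 0 < y) :
    a ≤ Real.log y / k ↔ Real.exp (k * a) ≤ y := by
  rw [le_div_iff₀ hk, Real.le_log_iff_exp_le hy, mul_comm]

theorem LowerSemicontinuousOn.log_div {α : Type*} [TopologicalSpace α] {f : α → ℝ} {s : Set α}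
    (hf : LowerSemicontinuousOn f s) (hpos : ∀ p ∈ s, 0 < f p) {k : ℝ} (hk : 0 < k) :
    LowerSemicontinuousOn (fun p => Real.log (f p) / k) s := by
  intro p hp c (hc : c < Real.log (f p) / k)
  have hexp : Real.exp (k * c) < f p := by
    rwa [lt_div_iff₀ hk, Real.lt_log_iff_exp_lt (hpos p hp), mul_comm] at hc
  filter_upwards [hf p hp _ hexp] with q hq
  show c < Real.log (f q) / k
  rwa [lt_div_iff₀ hk, Real.lt_log_iff_exp_lt ((Real.exp_pos _).trans hq), mul_comm]

theorem le_min_max_congr {α β : Type*} [LinearOrder α] [LinearOrder β] {a p q r : α}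
    {b p' q' r' : β} (hp : a ≤ p ↔ b ≤ p') (hq : a ≤ q ↔ b ≤ q') (hr : a ≤ r ↔ b ≤ r') :
    a ≤ min p (max q r) ↔ b ≤ min p' (max q' r') := by
  simp only [le_min_iff, le_max_iff, hp, hq, hr]

theorem expGen_smul {n d : ℕ} {A B : Type} {C y : ℝ} (hC : C ≠ 0) (hy : 0 < y)
    (F : ℝ → En n → ℝ → En d → A → B → ℝ) (t : ℝ) (x : En n) (z : En d) (α : A) (β : B) :
    expGen C F t x y ((y * (2 * C)) • z) α β
      = y * (2 * C) * (F t x (Real.log y / (2 * C)) z α β - C * ‖z‖ ^ 2) := by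
  have hinv : 1 / (2 * C * y) * (y * (2 * C)) = 1 := by field_simp
  rw [expGen, if_pos hy, smul_smul, hinv, one_smul, norm_smul, mul_pow, Real.norm_eq_abs, sq_abs]
  field_simp
  ring

theorem Hinf_expGen {n d : ℕ} (A B : Type) (b : ℝ → En n → A → B → En n)
    (σm : ℝ → En n → A → B → Matrix (Fin n) (Fin d) ℝ) (F : ℝ → En n → ℝ → En d → A → B → ℝ)
    {C y : ℝ} (hC : 0 < C) (hy : 0 < y) (t : ℝ) (x q : En n) (X : Matrix (Fin n) (Fin n) ℝ) :
    Hinf A B b σm (expGen C F) t x y ((y * (2 * C)) • q)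
        ((y * (2 * C)) • X + (y * (2 * C) * (2 * C)) • vecMulVec (WithLp.ofLp q) (WithLp.ofLp q))
      = y * (2 * C) * Hinf A B b σm F t x (Real.log y / (2 * C)) q X := by
  have ha : 0 ≤ y * (2 * C) := by positivity
  rw [Hinf, Hinf, Real.mul_iSup_of_nonneg ha]
  refine iSup_congr fun α => ?_
  rw [Real.mul_iInf_of_nonneg ha]
  refine iInf_congr fun β => ?_
  rw [rowMul_smul, expGen_smul hC.ne' hy, Matrix.mul_add, trace_add, Matrix.mul_smul,
    Matrix.mul_smul, trace_smul, trace_smul, trace_mul_transpose_mul_vecMulVec,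
    real_inner_smul_right, smul_eq_mul, smul_eq_mul]
  ring

theorem log_transform_supersolution_general
    {n d : ℕ}
    (T : ℝ)
    (A B : Type) [MetricSpace A]
    [MetricSpace B]
    (b : ℝ → En n → A → B → En n)
    (σm : ℝ → En n → A → B → Matrix (Fin n) (Fin d) ℝ)
    (F : ℝ → En n → ℝ → En d → A → B → ℝ)
    (g : En n → ℝ) (h h' : ℝ → En n → ℝ) (C : ℝ)
    (hH2 : HypH2 T C A B g h h' F)
    (w : ℝ → En n → ℝ)
    (hw : IsSupersolution T (Hinf A B b σm (expGen C F))
        (fun t x => Real.exp (2 * C * h t x)) (fun t x => Real.exp (2 * C * h' t x))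
        (fun x => Real.exp (2 * C * g x)) w)
    (hbound : ∀ t ∈ Icc (0:ℝ) T, ∀ x : En n,
      Real.exp (2 * C * h t x) ≤ w t x ∧ w t x ≤ Real.exp (2 * C * h' t x)) :
    IsSupersolution T (Hinf A B b σm F) h h' g
      (fun t x => Real.log (w t x) / (2 * C)) := by
  obtain ⟨hwlsc, hwT, hwtest⟩ := hw
  obtain ⟨-, -, -, -, -, -, -, -, hC, -⟩ := hH2
  have hk : 0 < 2 * C := by positivity
  have hwpos : ∀ t ∈ Icc (0 : ℝ) T, ∀ x, 0 < w t x :=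
    fun t ht x => (Real.exp_pos _).trans_le (hbound t ht x).1
  refine ⟨hwlsc.log_div (fun p hp => hwpos p.1 hp.1 p.2) hk,
    fun x => (le_log_div_iff_exp_mul_le hk ((Real.exp_pos _).trans_le (hwT x))).2 (hwT x), ?_⟩
  intro φ φt Dφ D2φ hφ t ht x hmin
  have hwtx := hwpos t ⟨ht.1, ht.2.le⟩ x
  have key := hwtest _ _ _ _ (hφ.comp (hasDerivAt_const_mul_exp_mul_sub (w t x) (2 * C) (φ t x))
      (hasDerivAt_const_mul_exp_mul_sub _ (2 * C) (φ t x)) (by fun_prop)) t ht x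
    (fun s hs y => by
      have := mul_exp_le_of_log_div_sub_le hk hwtx (hwpos s ⟨hs.1, hs.2.le⟩ y) (hmin s hs y)
      simp only [sub_self, mul_zero, Real.exp_zero, mul_one]
      linarith)
  simp only [sub_self, mul_zero, Real.exp_zero, mul_one] at key
  rw [Hinf_expGen A B b σm F hC hwtx, ← mul_assoc] at key
  have hobstacle : ∀ a, 0 ≤ w t x - Real.exp (2 * C * a) ↔ 0 ≤ Real.log (w t x) / (2 * C) - a :=
    fun a => by rw [sub_nonneg, sub_nonneg, le_log_div_iff_exp_mul_le hk hwtx]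
  refine (le_min_max_congr (hobstacle _) ?_ (hobstacle _)).1 key
  rw [neg_mul_eq_mul_neg, ← mul_sub]
  exact mul_nonneg_iff_of_pos_left (by positivity)

/-- Logarithmic transform of supersolutions: if `w` is a viscosity
supersolution of `E(f, e^{2Ch}, e^{2Ch'}, e^{2Cg})` lying between the exponential
obstacles, then `u = (ln w)/(2C)` is a viscosity supersolution of `(I⁻)`. -/
theorem log_transform_supersolution
    {n d : ℕ} (hn : 1 ≤ n) (hd : 1 ≤ d)
    (T : ℝ) (hT : 0 < T)
    (A B : Type) [MetricSpace A] [CompactSpace A] [Nonempty A]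
    [MetricSpace B] [CompactSpace B] [Nonempty B]
    (b : ℝ → En n → A → B → En n)
    (σm : ℝ → En n → A → B → Matrix (Fin n) (Fin d) ℝ)
    (F : ℝ → En n → ℝ → En d → A → B → ℝ)
    (g : En n → ℝ) (h h' : ℝ → En n → ℝ) (C : ℝ)
    (hH1 : HypH1 T A B b σm) (hH2 : HypH2 T C A B g h h' F)
    (w : ℝ → En n → ℝ)
    (hw : IsSupersolution T (Hinf A B b σm (expGen C F))
        (fun t x => Real.exp (2 * C * h t x)) (fun t x => Real.exp (2 * C * h' t x))
        (fun x => Real.exp (2 * C * g x)) w)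
    (hbound : ∀ t ∈ Icc (0:ℝ) T, ∀ x : En n,
      Real.exp (2 * C * h t x) ≤ w t x ∧ w t x ≤ Real.exp (2 * C * h' t x)) :
    IsSupersolution T (Hinf A B b σm F) h h' g
      (fun t x => Real.log (w t x) / (2 * C)) :=
  log_transform_supersolution_general T A B b σm F g h h' C hH2 w hw hbound
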